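/- Let G be a simple graph on a finite vertex set V with |V| = n ≥ 2 that has no isolated vertices (every vertex has degree at least 1), and let σ be an orientation of G. Let p = |det R_s(G^σ)|. Then √(2n/(n−1) + n·(n−2)·p^{2/n}) ≤ RE_s(G^σ) ≤ 2·⌊n/2⌋. -/

import Mathlib

open Matrix Polynomial

/-- `σ` is an orientation of the simple graph `G`. -/
def IsOrientation {V : Type*} [Fintype V] (G : SimpleGraph V) [DecidableRel G.Adj]
    (σ : V → V → ℝ) : Prop :=
  (∀ v w, σ v w + σ w v = 0) ∧
  (∀ v w, G.Adj v w → σ v w = 1 ∨ σ v w = -1) ∧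
  (∀ v w, ¬ G.Adj v w → σ v w = 0)

/-- The skew Randić matrix of the oriented graph `G^σ`. -/
noncomputable def skewRandicMatrix {V : Type*} [Fintype V] (G : SimpleGraph V)
    [DecidableRel G.Adj] (σ : V → V → ℝ) : Matrix V V ℝ :=
  fun v w => σ v w / Real.sqrt ((G.degree v : ℝ) * (G.degree w : ℝ))

/-- The Randić matrix of `G`. -/
noncomputable def randicMatrix {V : Type*} [Fintype V] (G : SimpleGraph V)
    [DecidableRel G.Adj] : Matrix V V ℝ :=
  fun v w => if G.Adj v w then 1 / Real.sqrt ((G.degree v : ℝ) * (G.degree w : ℝ)) else 0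

/-- The spectrum of a real matrix: the multiset of roots, with multiplicity, of its
characteristic polynomial regarded as a matrix over `ℂ`. -/
noncomputable def spec {V : Type*} [Fintype V] [DecidableEq V] (M : Matrix V V ℝ) :
    Multiset ℂ :=
  (M.map (fun x : ℝ => (x : ℂ))).charpoly.roots

/-- The energy of a real matrix: the sum of the absolute values of its spectrum. -/
noncomputable def energy {V : Type*} [Fintype V] [DecidableEq V] (M : Matrix V V ℝ) : ℝ :=
  ((spec M).map (fun z => ‖z‖)).sum

/-- The general Randić index `R_{-1}(G)`: the sum over all edges `{v,w}` of
`1/(d(v)·d(w))`. -/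
noncomputable def randicIndexNegOne {V : Type*} [Fintype V] [DecidableEq V]
    (G : SimpleGraph V) [DecidableRel G.Adj] : ℝ :=
  ∑ e ∈ G.edgeFinset,
    Sym2.lift ⟨fun v w => 1 / ((G.degree v : ℝ) * (G.degree w : ℝ)),
      fun v w => by simp [mul_comm]⟩ e

/-!
`I • R_s` is Hermitian, so the skew Randić spectrum is `{-I λ_v}` for real `λ_v`; as `R_s` is real,
its spectrum is closed under conjugation, i.e. the multiset of the `λ_v` is closed under negation.
Hence `RE_s = 2 ∑_{λ_v > 0} λ_v`, while `∑ λ_v ^ 2` is the squared Frobenius norm of `R_s`, which is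
at least `n / (n - 1)` because every degree is at most `n - 1`. Expanding `RE_s ^ 2` and applying
AM-GM to the products of ordered pairs of distinct positive `λ_v` gives the lower bound (a zero
eigenvalue forces `p = 0`). For the upper bound, `R_s` is similar to `D⁻¹ A_σ`, whose absolute row
sums are `1`, so Gershgorin's theorem gives `|λ_v| ≤ 1`, and at most `⌊n / 2⌋` of the `λ_v` are
positive.
-/

open scoped Finset

namespace Finset

variable {ι : Type*} [DecidableEq ι] (s : Finset ι)

theorem offDiag_eq_filter_ne : s.offDiag = (s ×ˢ s).filter (fun p => p.1 ≠ p.2) := by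
  ext
  simp [and_assoc]

theorem prod_offDiag_fst {M : Type*} [CommMonoid M] (f : ι → M) :
    ∏ p ∈ s.offDiag, f p.1 = ∏ i ∈ s, f i ^ (#s - 1) := by
  rw [offDiag_eq_filter_ne, prod_filter, prod_product]
  refine prod_congr rfl fun i hi => ?_
  simp only [prod_ite, prod_const_one, mul_one]
  rw [prod_const, filter_ne, card_erase_of_mem hi]

theorem prod_offDiag_snd {M : Type*} [CommMonoid M] (f : ι → M) :
    ∏ p ∈ s.offDiag, f p.2 = ∏ i ∈ s, f i ^ (#s - 1) := by
  rw [offDiag_eq_filter_ne, prod_filter, prod_product_right]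
  refine prod_congr rfl fun i hi => ?_
  simp only [prod_ite, prod_const_one, mul_one]
  rw [prod_const, filter_ne', card_erase_of_mem hi]

theorem prod_offDiag_mul {M : Type*} [CommMonoid M] (f : ι → M) :
    ∏ p ∈ s.offDiag, f p.1 * f p.2 = (∏ i ∈ s, f i) ^ (2 * (#s - 1)) := by
  rw [prod_mul_distrib, prod_offDiag_fst, prod_offDiag_snd, prod_pow, two_mul, pow_add]

theorem sum_offDiag_mul {R : Type*} [CommRing R] (a : ι → R) :
    ∑ p ∈ s.offDiag, a p.1 * a p.2 = (∑ i ∈ s, a i) ^ 2 - ∑ i ∈ s, a i ^ 2 := by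
  rw [eq_sub_iff_add_eq, sq, sum_mul_sum, ← sum_product', ← diag_union_offDiag,
    sum_union (disjoint_diag_offDiag s), sum_diag, add_comm]
  simp [sq]

end Finset

theorem card_mul_card_sub_one_mul_prod_rpow_le {ι : Type*} [DecidableEq ι] (s : Finset ι)
    {a : ι → ℝ} (ha : ∀ i ∈ s, 0 ≤ a i) :
    (#s : ℝ) * (#s - 1) * (∏ i ∈ s, a i) ^ ((2 : ℝ) / #s)
      ≤ (∑ i ∈ s, a i) ^ 2 - ∑ i ∈ s, a i ^ 2 := by
  have hpairs : ∀ p ∈ s.offDiag, 0 ≤ a p.1 * a p.2 := fun p hp => by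
    rw [Finset.mem_offDiag] at hp
    exact mul_nonneg (ha _ hp.1) (ha _ hp.2.1)
  rw [← Finset.sum_offDiag_mul]
  rcases le_or_gt #s 1 with hs | hs
  · have : (#s : ℝ) * (#s - 1) = 0 := by
      interval_cases h : #s <;> simp
    rw [this, zero_mul]
    exact Finset.sum_nonneg hpairs
  have hN : (#s.offDiag : ℝ) = #s * (#s - 1) := by
    rw [Finset.offDiag_card, Nat.cast_sub (Nat.le_mul_self _)]
    push_cast
    ring
  have hs1 : (1 : ℝ) < #s := by exact_mod_cast hs
  have hNpos : (0 : ℝ) < #s * (#s - 1) := by nlinarith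
  have hP : 0 ≤ ∏ i ∈ s, a i := Finset.prod_nonneg ha
  have amgm := Real.geom_mean_le_arith_mean s.offDiag (fun _ => 1) _ (fun _ _ => zero_le_one)
    (by rw [Finset.sum_const, nsmul_eq_mul, mul_one, hN]; exact hNpos) hpairs
  simp only [Real.rpow_one, one_mul, Finset.sum_const, nsmul_eq_mul, mul_one, hN,
    Finset.prod_offDiag_mul] at amgm
  rw [← Real.rpow_natCast, ← Real.rpow_mul hP, Nat.cast_mul, Nat.cast_sub hs.le] at amgm
  rw [← le_div_iff₀' hNpos]
  refine le_of_eq_of_le ?_ amgm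
  congr 1
  push_cast
  field_simp [(sub_pos.mpr hs1).ne']

theorem Multiset.map_abs_eq_of_map_neg_eq {s : Multiset ℝ} (h : s.map Neg.neg = s) :
    s.map abs = s.filter (0 < ·) + s.filter (0 < ·) + replicate (s.count 0) 0 := by
  have hsplit : s = s.filter (0 < ·) + s.filter (· < 0) + s.filter (· = 0) := by
    ext a
    simp only [count_add, count_filter]
    rcases lt_trichotomy 0 a with ha | rfl | ha
    · simp [ha, ha.not_gt, ha.ne']
    · simp
    · simp [ha, ha.not_gt, ha.ne]
  have hneg : (s.filter (· < 0)).map abs = s.filter (0 < ·) := by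
    calc (s.filter (· < 0)).map abs = (s.filter (· < 0)).map Neg.neg :=
          map_congr rfl fun x hx => abs_of_neg (mem_filter.mp hx).2
      _ = (s.map Neg.neg).filter (0 < ·) := by simp [filter_map]
      _ = s.filter (0 < ·) := by rw [h]
  have hpos : (s.filter (0 < ·)).map abs = s.filter (0 < ·) :=
    (map_congr rfl fun x hx => abs_of_pos (mem_filter.mp hx).2).trans (map_id _)
  conv_lhs => rw [hsplit]
  rw [map_add, map_add, hpos, hneg, filter_eq', map_replicate, abs_zero]

section NegationInvariant

variable {ι : Type*} [Fintype ι] {x : ι → ℝ}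

@[to_additive]
theorem prod_comp_abs_eq_of_map_neg_eq
    (hx : (Finset.univ.val.map x).map Neg.neg = Finset.univ.val.map x)
    {M : Type*} [CommMonoid M] (f : ℝ → M) :
    ∏ i, f |x i| = (∏ i with 0 < x i, f (x i)) ^ 2 * f 0 ^ (Finset.univ.val.map x).count 0 := by
  have hpos :
      (Finset.univ.val.map x).filter (0 < ·) = (Finset.univ.filter (0 < x ·)).val.map x := by
    rw [Multiset.filter_map, Finset.filter_val]
    rfl
  rw [Finset.prod_eq_multiset_prod,
    show Finset.univ.val.map (fun i => f |x i|) = ((Finset.univ.val.map x).map abs).map f by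
      simp only [Multiset.map_map]; rfl,
    Multiset.map_abs_eq_of_map_neg_eq hx, hpos]
  simp [Finset.prod_eq_multiset_prod, sq]

theorem sum_abs_eq_two_mul_sum_pos
    (hx : (Finset.univ.val.map x).map Neg.neg = Finset.univ.val.map x) :
    ∑ i, |x i| = 2 * ∑ i with 0 < x i, x i := by
  simpa using sum_comp_abs_eq_of_map_neg_eq hx id

theorem card_eq_of_map_neg_eq
    (hx : (Finset.univ.val.map x).map Neg.neg = Finset.univ.val.map x) :
    Fintype.card ι = 2 * #{i | 0 < x i} + (Finset.univ.val.map x).count 0 := by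
  simpa using sum_comp_abs_eq_of_map_neg_eq hx (fun _ => (1 : ℕ))

theorem two_mul_sum_sq_add_le_sq_sum_abs
    (hx : (Finset.univ.val.map x).map Neg.neg = Finset.univ.val.map x) :
    2 * ∑ i, x i ^ 2 + Fintype.card ι * (Fintype.card ι - 2 : ℝ) *
        (∏ i, |x i|) ^ ((2 : ℝ) / Fintype.card ι) ≤ (∑ i, |x i|) ^ 2 := by
  classical
  have hQ : ∑ i, x i ^ 2 = 2 * ∑ i with 0 < x i, x i ^ 2 := by
    have := sum_comp_abs_eq_of_map_neg_eq hx (M := ℝ) (· ^ 2)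
    simp only [sq_abs] at this
    simpa using this
  have hprod : ∏ i, |x i| = (∏ i with 0 < x i, x i) ^ 2 * 0 ^ (Finset.univ.val.map x).count 0 :=
    prod_comp_abs_eq_of_map_neg_eq hx id
  rw [sum_abs_eq_two_mul_sum_pos hx, hQ, hprod, card_eq_of_map_neg_eq hx]
  have amgm := card_mul_card_sub_one_mul_prod_rpow_le {i | 0 < x i} (a := x)
    fun i hi => (Finset.mem_filter.mp hi).2.le
  set P := Finset.univ.filter (0 < x ·)
  set k := (Finset.univ.val.map x).count 0
  have hP : 0 ≤ ∏ i ∈ P, x i := Finset.prod_nonneg fun i hi => (Finset.mem_filter.mp hi).2.le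
  rcases Nat.eq_zero_or_pos k with hk | hk
  -- here `n = 2 #P`, so `n (n - 2) p ^ (2 / n) = 4 #P (#P - 1) (∏ i ∈ P, x i) ^ (2 / #P)`
  · rw [hk, pow_zero, mul_one, add_zero, ← Real.rpow_natCast, ← Real.rpow_mul hP]
    have : (2 : ℕ) * ((2 : ℝ) / ↑(2 * #P)) = 2 / #P := by
      push_cast
      field_simp
    rw [this]
    push_cast
    linear_combination 4 * amgm
  · have hm : (0 : ℝ) ≤ #P * (#P - 1) := by
      rcases Nat.eq_zero_or_pos #P with h | h
      · simp [h]
      · have : (1 : ℝ) ≤ #P := by exact_mod_cast h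
        nlinarith
    rw [zero_pow hk.ne', mul_zero, Real.zero_rpow (by positivity), mul_zero, add_zero]
    linear_combination 4 * amgm + 4 * mul_nonneg hm (Real.rpow_nonneg hP ((2 : ℝ) / #P))

theorem sum_abs_le_two_mul_card_div_two
    (hx : (Finset.univ.val.map x).map Neg.neg = Finset.univ.val.map x) (hx1 : ∀ i, |x i| ≤ 1) :
    ∑ i, |x i| ≤ 2 * (Fintype.card ι / 2 : ℕ) := by
  have hpos : ∑ i with 0 < x i, x i ≤ #{i | 0 < x i} := by
    simpa using Finset.sum_le_card_nsmul _ _ _ fun i _ => (le_abs_self _).trans (hx1 i)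
  have hcard : #{i | 0 < x i} ≤ Fintype.card ι / 2 := by
    have := card_eq_of_map_neg_eq hx
    omega
  calc ∑ i, |x i| = 2 * ∑ i with 0 < x i, x i := sum_abs_eq_two_mul_sum_pos hx
    _ ≤ 2 * #{i | 0 < x i} := by gcongr
    _ ≤ 2 * (Fintype.card ι / 2 : ℕ) := by gcongr

end NegationInvariant

section Spectrum

variable {V : Type*} [Fintype V] [DecidableEq V]

theorem spec_eq_roots_map_charpoly (M : Matrix V V ℝ) :
    spec M = (M.charpoly.map Complex.ofRealHom).roots := by
  rw [spec, ← Matrix.charpoly_map]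
  rfl

theorem spec_mul_comm (A B : Matrix V V ℝ) : spec (A * B) = spec (B * A) := by
  rw [spec_eq_roots_map_charpoly, spec_eq_roots_map_charpoly, charpoly_mul_comm]

theorem map_conj_spec (M : Matrix V V ℝ) : (spec M).map (starRingEnd ℂ) = spec M := by
  rw [spec_eq_roots_map_charpoly, ← (IsAlgClosed.splits _).roots_map, Polynomial.map_map]
  congr 2
  ext r
  exact Complex.conj_ofReal r

theorem exists_norm_sub_le_of_mem_spec {M : Matrix V V ℝ} {z : ℂ} (hz : z ∈ spec M) :
    ∃ k, ‖z - M k k‖ ≤ ∑ j ∈ Finset.univ.erase k, |M k j| := by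
  have hroot := (Polynomial.mem_roots (charpoly_monic _).ne_zero).mp hz
  rw [← Matrix.charpoly_toLin', ← Module.End.hasEigenvalue_iff_isRoot_charpoly] at hroot
  simpa [dist_eq_norm] using eigenvalue_mem_ball hroot

end Spectrum

section SkewSymmetric

variable {V : Type*} {M : Matrix V V ℝ}

theorem isHermitian_I_smul_map_ofReal (hM : Mᵀ = -M) :
    (Complex.I • M.map ((↑) : ℝ → ℂ)).IsHermitian := by
  ext v w
  have hwv : M w v = -M v w := by simpa using congrFun (congrFun hM v) w
  simp [hwv]

variable [Fintype V] [DecidableEq V]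

noncomputable def skewEigenvalues (hM : Mᵀ = -M) : V → ℝ :=
  (isHermitian_I_smul_map_ofReal hM).eigenvalues

theorem map_ofReal_eq_unitary_conj (hM : Mᵀ = -M) :
    ∃ U : Matrix V V ℂ, star U * U = 1 ∧
      M.map ((↑) : ℝ → ℂ) = U * diagonal (fun v => -Complex.I * skewEigenvalues hM v) * star U := by
  have hH := isHermitian_I_smul_map_ofReal hM
  refine ⟨hH.eigenvectorUnitary, Unitary.coe_star_mul_self _, ?_⟩
  have hspec := congrArg (-Complex.I • ·) hH.spectral_theorem
  rw [Unitary.conjStarAlgAut_apply, smul_smul] at hspec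
  simp only [neg_mul, Complex.I_mul_I, neg_neg, one_smul] at hspec
  refine hspec.trans ?_
  rw [← Matrix.smul_mul, ← Matrix.mul_smul, ← diagonal_smul]
  rfl

theorem charpoly_map_ofReal_eq_prod (hM : Mᵀ = -M) :
    (M.map ((↑) : ℝ → ℂ)).charpoly = ∏ v, (X - C (-Complex.I * skewEigenvalues hM v)) := by
  obtain ⟨U, hU, hconj⟩ := map_ofReal_eq_unitary_conj hM
  rw [hconj, charpoly_mul_comm, ← mul_assoc, hU, one_mul, charpoly_diagonal]

theorem spec_eq_map_skewEigenvalues (hM : Mᵀ = -M) :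
    spec M = Finset.univ.val.map (fun v => -Complex.I * skewEigenvalues hM v) := by
  rw [spec, charpoly_map_ofReal_eq_prod hM,
    Polynomial.roots_prod _ _ (Finset.prod_ne_zero_iff.mpr fun v _ => X_sub_C_ne_zero _)]
  simp only [roots_X_sub_C, Multiset.bind_singleton]

theorem energy_eq_sum_abs_skewEigenvalues (hM : Mᵀ = -M) :
    energy M = ∑ v, |skewEigenvalues hM v| := by
  rw [energy, spec_eq_map_skewEigenvalues hM, Multiset.map_map, Finset.sum_eq_multiset_sum]
  simp

theorem abs_det_eq_prod_abs_skewEigenvalues (hM : Mᵀ = -M) :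
    |M.det| = ∏ v, |skewEigenvalues hM v| := by
  have hdet : ((M.det : ℝ) : ℂ) = (spec M).prod := by
    rw [spec, ← det_eq_prod_roots_charpoly, ← Complex.ofRealHom_eq_coe, RingHom.map_det]
    rfl
  rw [← Real.norm_eq_abs, ← Complex.norm_real, hdet, spec_eq_map_skewEigenvalues hM,
    ← Finset.prod_eq_multiset_prod, norm_prod]
  simp

theorem sum_sq_skewEigenvalues (hM : Mᵀ = -M) :
    ∑ v, skewEigenvalues hM v ^ 2 = ∑ v, ∑ w, M v w ^ 2 := by
  obtain ⟨U, hU, hconj⟩ := map_ofReal_eq_unitary_conj hM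
  set D := diagonal (fun v => -Complex.I * skewEigenvalues hM v)
  have hwv : ∀ v w, M w v = -M v w := fun v w => by simpa using congrFun (congrFun hM v) w
  have hreal : trace (M * M) = -∑ v, ∑ w, M v w ^ 2 := by
    simp only [trace, diag_apply, mul_apply, ← Finset.sum_neg_distrib]
    refine Finset.sum_congr rfl fun v _ => Finset.sum_congr rfl fun w _ => ?_
    rw [hwv v w]
    ring
  have hcomplex : trace (M.map ((↑) : ℝ → ℂ) * M.map ((↑) : ℝ → ℂ)) = trace (D * D) := by
    rw [hconj, show U * D * star U * (U * D * star U) = U * (D * D) * star U by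
      simp only [mul_assoc]; rw [← mul_assoc (star U), hU, one_mul],
      trace_mul_comm, ← mul_assoc, hU, one_mul]
  have : ((trace (M * M) : ℝ) : ℂ) = -∑ v, ((skewEigenvalues hM v ^ 2 : ℝ) : ℂ) := by
    convert hcomplex using 1
    · simp [trace, mul_apply]
    · simp only [D, diagonal_mul_diagonal, trace_diagonal, ← Finset.sum_neg_distrib]
      push_cast
      refine Finset.sum_congr rfl fun v _ => ?_
      linear_combination -(skewEigenvalues hM v : ℂ) ^ 2 * Complex.I_sq
  rw [hreal, Complex.ofReal_neg, neg_inj] at this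
  exact_mod_cast this.symm

theorem map_neg_skewEigenvalues (hM : Mᵀ = -M) :
    (Finset.univ.val.map (skewEigenvalues hM)).map Neg.neg =
      Finset.univ.val.map (skewEigenvalues hM) := by
  have hinj : Function.Injective (fun r : ℝ => -Complex.I * r) := fun a b hab => by
    simpa using hab
  apply Multiset.map_injective hinj
  have := map_conj_spec M
  rw [spec_eq_map_skewEigenvalues hM, Multiset.map_map] at this
  simp only [Multiset.map_map, Function.comp_def]
  convert this using 2 with v
  simp

theorem abs_skewEigenvalues_le (hM : Mᵀ = -M) {c : ℝ} (hc : ∀ z ∈ spec M, ‖z‖ ≤ c) (v : V) :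
    |skewEigenvalues hM v| ≤ c := by
  have hv := hc _ (spec_eq_map_skewEigenvalues hM ▸ Multiset.mem_map_of_mem _ (Finset.mem_univ v))
  simpa using hv

end SkewSymmetric

section SkewRandic

variable {V : Type*} [Fintype V] {G : SimpleGraph V} [DecidableRel G.Adj] {σ : V → V → ℝ}

theorem IsOrientation.abs_eq (hσ : IsOrientation G σ) (v w : V) :
    |σ v w| = if G.Adj v w then 1 else 0 := by
  split_ifs with h
  · rcases hσ.2.1 v w h with h1 | h1 <;> simp [h1]
  · simp [hσ.2.2 v w h]

theorem IsOrientation.sum_abs_eq_degree (hσ : IsOrientation G σ) (v : V) :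
    ∑ w, |σ v w| = G.degree v := by
  simp [hσ.abs_eq, Finset.sum_boole, ← SimpleGraph.card_neighborFinset_eq_degree,
    SimpleGraph.neighborFinset_eq_filter]

theorem skewRandicMatrix_transpose (hσ : IsOrientation G σ) :
    (skewRandicMatrix G σ)ᵀ = -skewRandicMatrix G σ := by
  ext v w
  rw [transpose_apply, neg_apply]
  simp only [skewRandicMatrix, mul_comm (G.degree w : ℝ), eq_neg_of_add_eq_zero_left (hσ.1 w v),
    neg_div]

theorem sq_skewRandicMatrix (hσ : IsOrientation G σ) (v w : V) :
    skewRandicMatrix G σ v w ^ 2 =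
      if G.Adj v w then 1 / ((G.degree v : ℝ) * G.degree w) else 0 := by
  rw [skewRandicMatrix, div_pow, ← sq_abs, hσ.abs_eq, Real.sq_sqrt (by positivity)]
  split_ifs <;> simp

theorem inv_card_sub_one_le_sum_sq_skewRandicMatrix (hσ : IsOrientation G σ) {v : V}
    (hv : 1 ≤ G.degree v) :
    1 / ((Fintype.card V : ℝ) - 1) ≤ ∑ w, skewRandicMatrix G σ v w ^ 2 := by
  have hneighbor : ∀ w ∈ G.neighborFinset v,
      1 / ((G.degree v : ℝ) * (Fintype.card V - 1)) ≤ 1 / ((G.degree v : ℝ) * G.degree w) := by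
    intro w hw
    have hdw : 0 < G.degree w :=
      (G.degree_pos_iff_exists_adj w).mpr ⟨v, ((G.mem_neighborFinset v w).mp hw).symm⟩
    have hwn : (G.degree w : ℝ) ≤ Fintype.card V - 1 := by
      rw [le_sub_iff_add_le]
      exact_mod_cast G.degree_lt_card_verts w
    gcongr
  calc 1 / ((Fintype.card V : ℝ) - 1)
      = ∑ _w ∈ G.neighborFinset v, 1 / ((G.degree v : ℝ) * (Fintype.card V - 1)) := by
        have : (G.degree v : ℝ) ≠ 0 := by positivity
        rw [Finset.sum_const, SimpleGraph.card_neighborFinset_eq_degree, nsmul_eq_mul]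
        field_simp
    _ ≤ ∑ w ∈ G.neighborFinset v, 1 / ((G.degree v : ℝ) * G.degree w) :=
        Finset.sum_le_sum hneighbor
    _ = ∑ w, skewRandicMatrix G σ v w ^ 2 := by
        simp [sq_skewRandicMatrix hσ, ← Finset.sum_filter, SimpleGraph.neighborFinset_eq_filter]

theorem card_div_card_sub_one_le_sum_sq_skewRandicMatrix (hσ : IsOrientation G σ)
    (hdeg : ∀ v, 1 ≤ G.degree v) :
    (Fintype.card V : ℝ) / (Fintype.card V - 1) ≤ ∑ v, ∑ w, skewRandicMatrix G σ v w ^ 2 := by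
  calc (Fintype.card V : ℝ) / (Fintype.card V - 1)
      = ∑ _v : V, 1 / ((Fintype.card V : ℝ) - 1) := by
        rw [Finset.sum_const, Finset.card_univ, nsmul_eq_mul, mul_one_div]
    _ ≤ _ := Finset.sum_le_sum fun v _ => inv_card_sub_one_le_sum_sq_skewRandicMatrix hσ (hdeg v)

variable [DecidableEq V]

theorem spec_skewRandicMatrix (hdeg : ∀ v, 1 ≤ G.degree v) :
    spec (skewRandicMatrix G σ) = spec (of fun v w => σ v w / G.degree v) := by
  have hd : ∀ v, (0 : ℝ) < G.degree v := fun v => by exact_mod_cast hdeg v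
  have hs : ∀ v, Real.sqrt (G.degree v) ≠ 0 := fun v => (Real.sqrt_pos.mpr (hd v)).ne'
  set s : V → ℝ := fun v => Real.sqrt (G.degree v)
  have hconj : skewRandicMatrix G σ
      = diagonal s * (of (fun v w => σ v w / G.degree v) * diagonal s⁻¹) := by
    ext v w
    simp only [skewRandicMatrix, diagonal_mul, mul_diagonal, of_apply, Pi.inv_apply, s]
    rw [Real.sqrt_mul (hd v).le]
    field_simp [hs v, hs w]
    rw [Real.sq_sqrt (hd v).le, mul_div_cancel_right₀ _ (hd v).ne']
  rw [hconj, spec_mul_comm, mul_assoc, diagonal_mul_diagonal]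
  simp [s, hs]

theorem norm_le_one_of_mem_spec_skewRandicMatrix (hσ : IsOrientation G σ)
    (hdeg : ∀ v, 1 ≤ G.degree v) {z : ℂ} (hz : z ∈ spec (skewRandicMatrix G σ)) : ‖z‖ ≤ 1 := by
  rw [spec_skewRandicMatrix hdeg] at hz
  obtain ⟨k, hk⟩ := exists_norm_sub_le_of_mem_spec hz
  have hdk : (0 : ℝ) < G.degree k := by exact_mod_cast hdeg k
  have hkk : σ k k = 0 := by linarith [hσ.1 k k]
  calc ‖z‖ ≤ ∑ j ∈ Finset.univ.erase k, |σ k j / G.degree k| := by simpa [hkk] using hk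
    _ ≤ ∑ j, |σ k j / G.degree k| := Finset.sum_le_sum_of_subset_of_nonneg
        (Finset.erase_subset _ _) fun _ _ _ => abs_nonneg _
    _ = 1 := by
        simp_rw [abs_div, Nat.abs_cast, ← Finset.sum_div, hσ.sum_abs_eq_degree]
        exact div_self hdk.ne'

end SkewRandic

theorem skewRandic_energy_bounds_no_isolated_general
    {V : Type*} [Fintype V] [DecidableEq V] (G : SimpleGraph V) [DecidableRel G.Adj]
    (σ : V → V → ℝ) (hσ : IsOrientation G σ)
    (hdeg : ∀ v : V, 1 ≤ G.degree v) :
    Real.sqrt ((2 * (Fintype.card V : ℝ)) / ((Fintype.card V : ℝ) - 1) +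
        (Fintype.card V : ℝ) * ((Fintype.card V : ℝ) - 2) *
          |(skewRandicMatrix G σ).det| ^ ((2 : ℝ) / (Fintype.card V : ℝ)))
      ≤ energy (skewRandicMatrix G σ) ∧
    energy (skewRandicMatrix G σ) ≤ 2 * (Fintype.card V / 2 : ℕ) := by
  have hM := skewRandicMatrix_transpose hσ
  have hsymm := map_neg_skewEigenvalues hM
  rw [energy_eq_sum_abs_skewEigenvalues hM, abs_det_eq_prod_abs_skewEigenvalues hM]
  constructor
  · refine Real.sqrt_le_iff.mpr ⟨Finset.sum_nonneg fun _ _ => abs_nonneg _, ?_⟩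
    have hsq := two_mul_sum_sq_add_le_sq_sum_abs hsymm
    rw [sum_sq_skewEigenvalues hM] at hsq
    have hF := card_div_card_sub_one_le_sum_sq_skewRandicMatrix hσ hdeg
    rw [mul_div_assoc]
    linarith
  · exact sum_abs_le_two_mul_card_div_two hsymm
      (abs_skewEigenvalues_le hM fun _ => norm_le_one_of_mem_spec_skewRandicMatrix hσ hdeg)

theorem skewRandic_energy_bounds_no_isolated
    {V : Type*} [Fintype V] [DecidableEq V] (G : SimpleGraph V) [DecidableRel G.Adj]
    (σ : V → V → ℝ) (hσ : IsOrientation G σ) (hn : 2 ≤ Fintype.card V)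
    (hdeg : ∀ v : V, 1 ≤ G.degree v) :
    Real.sqrt ((2 * (Fintype.card V : ℝ)) / ((Fintype.card V : ℝ) - 1) +
        (Fintype.card V : ℝ) * ((Fintype.card V : ℝ) - 2) *
          |(skewRandicMatrix G σ).det| ^ ((2 : ℝ) / (Fintype.card V : ℝ)))
      ≤ energy (skewRandicMatrix G σ) ∧
    energy (skewRandicMatrix G σ) ≤ 2 * (Fintype.card V / 2 : ℕ) :=
  skewRandic_energy_bounds_no_isolated_general G σ hσ hdeg
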